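/- arXiv:1606.01498 — 6 statements merged into one kernel-verified Lean document; each statement's English description precedes it below -/
import Mathlib

section
/- Let A ∈ L(Ξ), Q ∈ L(∂Ξ, Ξ) with A + A* = −Qϑ^{−1}Q*, ϑ > 0, and suppose the pair (A, Q) is controllable. Then the spectrum of A is contained in the open left half-plane {z ∈ ℂ : Re z < 0}. -/
open Matrix
open scoped ComplexOrder

/-- If `A + A* = -Q ϑ⁻¹ Q*` with `ϑ > 0` and the pair `(A, Q)` is controllable
(`⋂ₙ Ker (Q* A*ⁿ) = {0}`), then the spectrum of `A` lies in the open left half-plane. -/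
theorem controllable_implies_stable {m d : Type*}
    [Fintype m] [Fintype d] [DecidableEq m] [DecidableEq d]
    (A : Matrix m m ℂ) (Q : Matrix m d ℂ) (ϑ : Matrix d d ℂ)
    (hϑ : ϑ.PosDef)
    (hstruct : A + Aᴴ = -(Q * ϑ⁻¹ * Qᴴ))
    (hcontrol : ∀ z : m → ℂ, (∀ n : ℕ, Qᴴ.mulVec ((Aᴴ ^ n).mulVec z) = 0) → z = 0) :
    ∀ μ ∈ spectrum ℂ A, μ.re < 0 := by
  intro μ hμ
  -- extract an eigenvector
  have hE : Module.End.HasEigenvalue (Matrix.toLin' A) μ := by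
    rw [Module.End.hasEigenvalue_iff_mem_spectrum]
    rwa [← AlgEquiv.spectrum_eq (toLinAlgEquiv <| Pi.basisFun ℂ m) A] at hμ
  obtain ⟨v, hv⟩ := hE.exists_hasEigenvector
  have hv0 : v ≠ 0 := hv.right
  have hAv : A *ᵥ v = μ • v := by
    have := hv.apply_eq_smul
    rwa [Matrix.toLin'_apply] at this
  set w : d → ℂ := Qᴴ *ᵥ v with hw
  -- left side of quadratic form identity
  have hAHv : star v ⬝ᵥ (Aᴴ *ᵥ v) = (starRingEnd ℂ) μ * (star v ⬝ᵥ v) := by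
    rw [dotProduct_mulVec, ← star_mulVec, hAv, star_smul, smul_dotProduct]
    rfl
  have hQform : star v ⬝ᵥ ((Q * ϑ⁻¹ * Qᴴ) *ᵥ v) = star w ⬝ᵥ (ϑ⁻¹ *ᵥ w) := by
    rw [hw, ← mulVec_mulVec, ← mulVec_mulVec, dotProduct_mulVec (star v) Q]
    congr 1
    rw [star_mulVec, conjTranspose_conjTranspose]
  have key : (μ + (starRingEnd ℂ) μ) * (star v ⬝ᵥ v) = -(star w ⬝ᵥ (ϑ⁻¹ *ᵥ w)) := by
    have h1 : star v ⬝ᵥ ((A + Aᴴ) *ᵥ v) = (μ + (starRingEnd ℂ) μ) * (star v ⬝ᵥ v) := by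
      rw [add_mulVec, dotProduct_add, hAHv, hAv]
      simp [dotProduct_smul, smul_eq_mul]
      ring
    have h2 : star v ⬝ᵥ ((A + Aᴴ) *ᵥ v) = -(star w ⬝ᵥ (ϑ⁻¹ *ᵥ w)) := by
      rw [hstruct, neg_mulVec, dotProduct_neg, hQform]
    rw [← h1, h2]
  -- real-part form
  have hvpos : 0 < (star v ⬝ᵥ v).re := by
    have := Matrix.dotProduct_star_self_pos_iff (v := v) |>.mpr hv0
    rw [Complex.lt_def] at this
    simpa using this.1
  have hqnn : 0 ≤ star w ⬝ᵥ (ϑ⁻¹ *ᵥ w) := hϑ.inv.posSemidef.dotProduct_mulVec_nonneg w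
  have hqre : 0 ≤ (star w ⬝ᵥ (ϑ⁻¹ *ᵥ w)).re ∧ (star w ⬝ᵥ (ϑ⁻¹ *ᵥ w)).im = 0 := by
    rw [Complex.le_def] at hqnn
    constructor
    · simpa using hqnn.1
    · simpa using hqnn.2.symm
  have hsum : μ + (starRingEnd ℂ) μ = ((2 * μ.re : ℝ) : ℂ) := by
    rw [Complex.add_conj]
  have keyre : (2 * μ.re) * (star v ⬝ᵥ v).re = -(star w ⬝ᵥ (ϑ⁻¹ *ᵥ w)).re := by
    have := congrArg Complex.re key
    rw [hsum] at this
    simpa [Complex.re_ofReal_mul] using this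
  -- Re μ ≤ 0
  have hle : μ.re ≤ 0 := by
    nlinarith [hqre.1, hvpos, keyre]
  rcases lt_or_eq_of_le hle with h | h
  · exact h
  -- Re μ = 0 : derive contradiction via controllability
  exfalso
  have hqzero : star w ⬝ᵥ (ϑ⁻¹ *ᵥ w) = 0 := by
    have hre0 : (star w ⬝ᵥ (ϑ⁻¹ *ᵥ w)).re = 0 := by
      nlinarith [keyre, hvpos]
    exact Complex.ext (by simpa using hre0) (by simpa using hqre.2)
  have hwzero : w = 0 := by
    by_contra hwne
    exact (hϑ.inv.dotProduct_mulVec_pos hwne).ne' hqzero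
  -- then Aᴴ v = -μ v
  have hAH : Aᴴ *ᵥ v = (-μ) • v := by
    have hAHeq : Aᴴ = -(Q * ϑ⁻¹ * Qᴴ) - A := by
      rw [← hstruct]; abel
    have hQv : Qᴴ *ᵥ v = 0 := hwzero
    rw [hAHeq, sub_mulVec, neg_mulVec, ← mulVec_mulVec, hQv, hAv]
    simp
  have hpow : ∀ n : ℕ, (Aᴴ ^ n) *ᵥ v = (-μ) ^ n • v := by
    intro n
    induction n with
    | zero => simp
    | succ k ih =>
      rw [pow_succ, ← mulVec_mulVec, hAH, mulVec_smul, ih, smul_smul, pow_succ]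
      ring_nf
  have : v = 0 := by
    apply hcontrol
    intro n
    rw [hpow n, mulVec_smul, ← hw, hwzero, smul_zero]
  exact hv0 this
end

section
/- Let A + A* = −Qϑ^{−1}Q* with 0 < ϑ_min ≤ ϑ ≤ ϑ_max, and M_t = ∫₀^t e^{sA} Q Q* e^{sA*} ds. Then for all t ≥ 0: ϑ_min (I − e^{tA} e^{tA*}) ≤ M_t ≤ ϑ_max (I − e^{tA} e^{tA*}) ≤ ϑ_max · I. -/
open Matrix NormedSpace

attribute [local instance] Matrix.linftyOpNormedAddCommGroup Matrix.linftyOpNormedRing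
  Matrix.linftyOpNormedAlgebra

private noncomputable def matCENorm {m : Type*} [Fintype m] :
    @ContinuousENorm (Matrix m m ℝ) instTopologicalSpaceMatrix :=
  SeminormedAddGroup.toContinuousENorm

attribute [local instance] matCENorm

open scoped MatrixOrder

section Aux

open MeasureTheory Set

variable {m : Type*} [Fintype m] [DecidableEq m]

private lemma psd_smul' {c : ℝ} {M : Matrix m m ℝ} (hc : 0 ≤ c) (hM : M.PosSemidef) :
    (c • M).PosSemidef := by
  exact hM.smul hc

private noncomputable def entryCLM (i j : m) : Matrix m m ℝ →L[ℝ] ℝ :=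
  LinearMap.toContinuousLinearMap
    { toFun := fun M => M i j
      map_add' := fun _ _ => rfl
      map_smul' := fun _ _ => rfl }

@[simp] private lemma entryCLM_apply (i j : m) (M : Matrix m m ℝ) :
    entryCLM i j M = M i j := rfl

private noncomputable def quadCLM (x : m → ℝ) : Matrix m m ℝ →L[ℝ] ℝ :=
  LinearMap.toContinuousLinearMap
    { toFun := fun M => star x ⬝ᵥ M *ᵥ x
      map_add' := fun M N => by simp [Matrix.add_mulVec, dotProduct_add]
      map_smul' := fun c M => by simp [Matrix.smul_mulVec] }

@[simp] private lemma quadCLM_apply (x : m → ℝ) (M : Matrix m m ℝ) :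
    quadCLM x M = star x ⬝ᵥ M *ᵥ x := rfl

private lemma contG (A C : Matrix m m ℝ) :
    Continuous fun s : ℝ => NormedSpace.exp (s • A) * C * NormedSpace.exp (s • Aᵀ) := by
  have h1 : Continuous fun s : ℝ => NormedSpace.exp (s • A) :=
    exp_continuous.comp (continuous_id.smul continuous_const)
  have h2 : Continuous fun s : ℝ => NormedSpace.exp (s • Aᵀ) :=
    exp_continuous.comp (continuous_id.smul continuous_const)
  exact (h1.mul continuous_const).mul h2

private lemma intG (A C : Matrix m m ℝ) (t : ℝ) :
    IntegrableOn (fun s : ℝ => NormedSpace.exp (s • A) * C * NormedSpace.exp (s • Aᵀ)) (Ioc 0 t) :=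
  (contG A C).integrableOn_Ioc

private lemma entry_integral (A C : Matrix m m ℝ) (t : ℝ) (i j : m) :
    (∫ s in Ioc (0:ℝ) t, NormedSpace.exp (s • A) * C * NormedSpace.exp (s • Aᵀ)) i j
      = ∫ s in Ioc (0:ℝ) t, (NormedSpace.exp (s • A) * C * NormedSpace.exp (s • Aᵀ)) i j :=
  ((entryCLM i j).integral_comp_comm (intG A C t)).symm

private lemma posSemidef_integral {t : ℝ} {G : ℝ → Matrix m m ℝ}
    (hint : IntegrableOn G (Ioc 0 t)) (hG : ∀ s, (G s).PosSemidef) :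
    (∫ s in Ioc (0:ℝ) t, G s).PosSemidef := by
  refine Matrix.posSemidef_iff_dotProduct_mulVec.mpr ⟨?_, fun x => ?_⟩
  · ext i j
    rw [conjTranspose_apply, star_trivial]
    have e1 := (entryCLM j i).integral_comp_comm hint
    have e2 := (entryCLM i j).integral_comp_comm hint
    change ∫ s in Ioc (0:ℝ) t, G s j i = (∫ s in Ioc (0:ℝ) t, G s) j i at e1
    change ∫ s in Ioc (0:ℝ) t, G s i j = (∫ s in Ioc (0:ℝ) t, G s) i j at e2
    rw [← e1, ← e2]
    congr 1
    funext s
    have h := congrFun (congrFun (hG s).1 i) j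
    rw [conjTranspose_apply, star_trivial] at h
    exact h
  · rw [← quadCLM_apply]
    refine le_of_le_of_eq ?_ ((quadCLM x).integral_comp_comm hint)
    refine setIntegral_nonneg measurableSet_Ioc fun s _ => ?_
    exact (hG s).dotProduct_mulVec_nonneg x

private lemma integral_exp_sandwich (A B : Matrix m m ℝ) (hAB : A + Aᵀ = -B)
    {t : ℝ} (ht : 0 ≤ t) :
    ∫ s in Ioc (0:ℝ) t, NormedSpace.exp (s • A) * B * NormedSpace.exp (s • Aᵀ)
      = 1 - NormedSpace.exp (t • A) * NormedSpace.exp (t • Aᵀ) := by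
  have hB : B = -(A + Aᵀ) := by rw [hAB, neg_neg]
  have hderiv : ∀ s : ℝ, HasDerivAt (fun u : ℝ => -(NormedSpace.exp (u • A) * NormedSpace.exp (u • Aᵀ)))
      (NormedSpace.exp (s • A) * B * NormedSpace.exp (s • Aᵀ)) s := by
    intro s
    have h1 := hasDerivAt_exp_smul_const (𝕂 := ℝ) A s
    have h2 := hasDerivAt_exp_smul_const' (𝕂 := ℝ) Aᵀ s
    have h3 := (h1.mul h2).neg
    convert h3 using 1
    · rfl
    · rfl
    · rfl
    · rfl
    rw [hB]
    noncomm_ring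
  have key := intervalIntegral.integral_eq_sub_of_hasDerivAt
      (f := fun u : ℝ => -(NormedSpace.exp (u • A) * NormedSpace.exp (u • Aᵀ)))
      (f' := fun s : ℝ => NormedSpace.exp (s • A) * B * NormedSpace.exp (s • Aᵀ))
      (a := 0) (b := t)
      (fun s _ => hderiv s) ((contG A B).intervalIntegrable 0 t)
  rw [intervalIntegral.integral_of_le ht] at key
  rw [key]
  simp only [zero_smul, exp_zero, one_mul]
  abel

end Aux

/-- If `A + Aᵀ = -Q ϑ⁻¹ Qᵀ` with `0 < ϑ_min ≤ ϑ ≤ ϑ_max`, then for all `t ≥ 0`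
the finite-time Gramian `M_t = ∫₀^t e^{sA} Q Qᵀ e^{sAᵀ} ds` satisfies
`ϑ_min (I - e^{tA} e^{tAᵀ}) ≤ M_t ≤ ϑ_max (I - e^{tA} e^{tAᵀ}) ≤ ϑ_max I`. -/
theorem gramian_loewner_bounds {m d : Type*}
    [Fintype m] [Fintype d] [DecidableEq m] [DecidableEq d]
    (A : Matrix m m ℝ) (Q : Matrix m d ℝ) (ϑ : Matrix d d ℝ)
    (ϑmin ϑmax : ℝ) (hmin : 0 < ϑmin) (hminmax : ϑmin ≤ ϑmax)
    (hϑ : ϑ.PosDef)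
    (h1 : (ϑ - ϑmin • 1).PosSemidef) (h2 : (ϑmax • 1 - ϑ).PosSemidef)
    (hstruct : A + Aᵀ = -(Q * ϑ⁻¹ * Qᵀ))
    (t : ℝ) (ht : 0 ≤ t) (Mt : Matrix m m ℝ)
    (hMt : ∀ i j, Mt i j =
      ∫ s in Set.Ioc (0 : ℝ) t, (NormedSpace.exp (s • A) * (Q * Qᵀ) * NormedSpace.exp (s • Aᵀ)) i j) :
    (Mt - ϑmin • ((1 : Matrix m m ℝ) - NormedSpace.exp (t • A) * NormedSpace.exp (t • Aᵀ))).PosSemidef ∧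
    (ϑmax • ((1 : Matrix m m ℝ) - NormedSpace.exp (t • A) * NormedSpace.exp (t • Aᵀ)) - Mt).PosSemidef ∧
    (ϑmax • (1 : Matrix m m ℝ) -
      ϑmax • ((1 : Matrix m m ℝ) - NormedSpace.exp (t • A) * NormedSpace.exp (t • Aᵀ))).PosSemidef := by
  classical
  open MeasureTheory Set in
  -- basic facts about ϑ
  have hϑH : ϑᵀ = ϑ := by
    have h := hϑ.isHermitian
    rwa [Matrix.IsHermitian, conjTranspose_eq_transpose_of_trivial] at h
  have hdet : IsUnit ϑ.det := isUnit_iff_ne_zero.mpr hϑ.det_pos.ne'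
  have hϑinvT : ϑ⁻¹ᵀ = ϑ⁻¹ := by rw [transpose_nonsing_inv, hϑH]
  -- the square root of ϑ
  set T : Matrix d d ℝ := CFC.sqrt ϑ with hTdef
  have hTT : T * T = ϑ := CFC.sqrt_mul_sqrt_self ϑ hϑ.posSemidef.nonneg
  have hTsymm : Tᵀ = T := by
    have h := (CFC.sqrt_nonneg ϑ).posSemidef.1
    rwa [Matrix.IsHermitian, conjTranspose_eq_transpose_of_trivial] at h
  -- rewriting helpers
  have hTT' : ∀ X : Matrix d m ℝ, T * (T * X) = ϑ * X := fun X => by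
    rw [← Matrix.mul_assoc, hTT]
  have hinv1 : ∀ X : Matrix d m ℝ, ϑ⁻¹ * (ϑ * X) = X := fun X => by
    rw [← Matrix.mul_assoc, Matrix.nonsing_inv_mul _ hdet, Matrix.one_mul]
  have hinv2 : ∀ X : Matrix d m ℝ, ϑ * (ϑ⁻¹ * X) = X := fun X => by
    rw [← Matrix.mul_assoc, Matrix.mul_nonsing_inv _ hdet, Matrix.one_mul]
  have hTϑ : T * ϑ = ϑ * T := by rw [← hTT, Matrix.mul_assoc]
  have hcomm : ∀ X : Matrix d m ℝ, T * (ϑ * X) = ϑ * (T * X) := fun X => by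
    rw [← Matrix.mul_assoc, hTϑ, Matrix.mul_assoc]
  set N : Matrix m d ℝ := Q * ϑ⁻¹ * T with hNdef
  have hNH : Nᴴ = T * ϑ⁻¹ * Qᵀ := by
    rw [conjTranspose_eq_transpose_of_trivial, hNdef, Matrix.transpose_mul,
      Matrix.transpose_mul, hTsymm, hϑinvT, Matrix.mul_assoc]
  -- the two key sandwich identities
  have hsand : ∀ S : Matrix d d ℝ, N * S * Nᴴ
      = Q * ϑ⁻¹ * (T * S * T) * ϑ⁻¹ * Qᵀ := by
    intro S
    rw [hNH, hNdef]
    simp only [Matrix.mul_assoc]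
  have hD1 : N * (ϑ - ϑmin • 1) * Nᴴ = Q * Qᵀ - ϑmin • (Q * ϑ⁻¹ * Qᵀ) := by
    rw [hsand]
    simp only [Matrix.mul_sub, Matrix.sub_mul, Matrix.mul_smul, Matrix.smul_mul,
      Matrix.mul_one, Matrix.one_mul, Matrix.mul_assoc, hcomm, hTT', hinv1, hinv2]
  have hD2 : N * (ϑmax • 1 - ϑ) * Nᴴ = ϑmax • (Q * ϑ⁻¹ * Qᵀ) - Q * Qᵀ := by
    rw [hsand]
    simp only [Matrix.mul_sub, Matrix.sub_mul, Matrix.mul_smul, Matrix.smul_mul,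
      Matrix.mul_one, Matrix.one_mul, Matrix.mul_assoc, hcomm, hTT', hinv1, hinv2]
  have hpsd1 : (Q * Qᵀ - ϑmin • (Q * ϑ⁻¹ * Qᵀ)).PosSemidef := by
    rw [← hD1]; exact h1.mul_mul_conjTranspose_same N
  have hpsd2 : (ϑmax • (Q * ϑ⁻¹ * Qᵀ) - Q * Qᵀ).PosSemidef := by
    rw [← hD2]; exact h2.mul_mul_conjTranspose_same N
  -- conjugation by exp(s•A)
  have hexpH : ∀ s : ℝ, (NormedSpace.exp (s • A))ᴴ = NormedSpace.exp (s • Aᵀ) := fun s => by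
    rw [conjTranspose_eq_transpose_of_trivial, ← Matrix.exp_transpose, transpose_smul]
  -- Mt as a matrix-valued integral
  have hMt' : Mt = ∫ s in Ioc (0:ℝ) t, NormedSpace.exp (s • A) * (Q * Qᵀ) * NormedSpace.exp (s • Aᵀ) := by
    ext i j
    rw [hMt i j, entry_integral]
  have hkey := integral_exp_sandwich A (Q * ϑ⁻¹ * Qᵀ) hstruct ht
  have hint1 := intG A (Q * Qᵀ) t
  have hint2 := intG A (Q * ϑ⁻¹ * Qᵀ) t
  refine ⟨?_, ?_, ?_⟩
  · have hsub : Mt - ϑmin • ((1 : Matrix m m ℝ) - NormedSpace.exp (t • A) * NormedSpace.exp (t • Aᵀ))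
        = ∫ s in Ioc (0:ℝ) t,
            NormedSpace.exp (s • A) * (Q * Qᵀ - ϑmin • (Q * ϑ⁻¹ * Qᵀ)) * NormedSpace.exp (s • Aᵀ) := by
      have h2' : MeasureTheory.IntegrableOn
          (fun s : ℝ => ϑmin • (NormedSpace.exp (s • A) * (Q * ϑ⁻¹ * Qᵀ) * NormedSpace.exp (s • Aᵀ)))
          (Ioc 0 t) := hint2.smul ϑmin
      rw [hMt', ← hkey, ← integral_smul, ← integral_sub hint1 h2']
      congr 1
      funext s
      simp only [Matrix.mul_sub, Matrix.sub_mul, Matrix.mul_smul, Matrix.smul_mul,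
        Pi.smul_apply, smul_eq_mul]
    rw [hsub]
    refine posSemidef_integral (intG A _ t) fun s => ?_
    have h := hpsd1.mul_mul_conjTranspose_same (NormedSpace.exp (s • A))
    rwa [hexpH s] at h
  · have hsub : ϑmax • ((1 : Matrix m m ℝ) - NormedSpace.exp (t • A) * NormedSpace.exp (t • Aᵀ)) - Mt
        = ∫ s in Ioc (0:ℝ) t,
            NormedSpace.exp (s • A) * (ϑmax • (Q * ϑ⁻¹ * Qᵀ) - Q * Qᵀ) * NormedSpace.exp (s • Aᵀ) := by
      have h2' : MeasureTheory.IntegrableOn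
          (fun s : ℝ => ϑmax • (NormedSpace.exp (s • A) * (Q * ϑ⁻¹ * Qᵀ) * NormedSpace.exp (s • Aᵀ)))
          (Ioc 0 t) := hint2.smul ϑmax
      rw [hMt', ← hkey, ← integral_smul, ← integral_sub h2' hint1]
      congr 1
      funext s
      simp only [Matrix.mul_sub, Matrix.sub_mul, Matrix.mul_smul, Matrix.smul_mul,
        Pi.smul_apply, smul_eq_mul]
    rw [hsub]
    refine posSemidef_integral (intG A _ t) fun s => ?_
    have h := hpsd2.mul_mul_conjTranspose_same (NormedSpace.exp (s • A))
    rwa [hexpH s] at h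
  · have : ϑmax • (1 : Matrix m m ℝ) -
        ϑmax • ((1 : Matrix m m ℝ) - NormedSpace.exp (t • A) * NormedSpace.exp (t • Aᵀ))
        = ϑmax • (NormedSpace.exp (t • A) * NormedSpace.exp (t • Aᵀ)) := by
      rw [smul_sub]; abel
    rw [this]
    refine psd_smul' (le_trans hmin.le hminmax) ?_
    have h := Matrix.posSemidef_self_mul_conjTranspose (NormedSpace.exp (t • A))
    rwa [hexpH t] at h
end

section
/- Let A be stable with AM + MA* + QQ* = 0, M > 0, set Ω = (A − A*)/2. If MQ = Qϑ (for ϑ self-adjoint on ∂Ξ with Qϑ^{−1}Q* = −(A + A*)), then [Ω, M] = 0. -/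
open Matrix

/-- If `A` is stable, `AM + MAᵀ + QQᵀ = 0`, `M > 0`, `Ω = (A - Aᵀ)/2`, and
`MQ = Qϑ` for a self-adjoint `ϑ` with `Q ϑ⁻¹ Qᵀ = -(A + Aᵀ)`, then `[Ω, M] = 0`. -/
theorem MQ_eq_Qtheta_implies_Omega_commutes {m d : Type*}
    [Fintype m] [Fintype d] [DecidableEq m] [DecidableEq d]
    (A M : Matrix m m ℝ) (Q : Matrix m d ℝ) (ϑ : Matrix d d ℝ)
    (hstable : ∀ μ ∈ spectrum ℂ (A.map (Complex.ofReal : ℝ → ℂ)), μ.re < 0)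
    (hlyap : A * M + M * Aᵀ + Q * Qᵀ = 0) (hMpos : M.PosDef)
    (hϑ : ϑ.PosDef) (hϑsym : ϑᵀ = ϑ)
    (hstruct : Q * ϑ⁻¹ * Qᵀ = -(A + Aᵀ))
    (hMQ : M * Q = Q * ϑ) :
    ((1 / 2 : ℝ) • (A - Aᵀ)) * M = M * ((1 / 2 : ℝ) • (A - Aᵀ)) := by
  have hdet : IsUnit ϑ.det := isUnit_iff_ne_zero.mpr hϑ.det_pos.ne'
  have hMsym : Mᵀ = M := hMpos.1.eq
  have hQM : Qᵀ * M = ϑ * Qᵀ := by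
    calc Qᵀ * M = (M * Q)ᵀ := by rw [Matrix.transpose_mul, hMsym]
    _ = ϑ * Qᵀ := by rw [hMQ, Matrix.transpose_mul, hϑsym]
  have hlyap' : A * M + M * Aᵀ = -(Q * Qᵀ) := by
    have h := hlyap
    rw [← eq_neg_iff_add_eq_zero] at h
    exact h
  have h1 : (A + Aᵀ) * M = -(Q * Qᵀ) := by
    have : (A + Aᵀ) = -(Q * ϑ⁻¹ * Qᵀ) := by rw [hstruct, neg_neg]
    rw [this]
    calc -(Q * ϑ⁻¹ * Qᵀ) * M = -(Q * ϑ⁻¹ * (Qᵀ * M)) := by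
          rw [neg_mul, Matrix.mul_assoc]
    _ = -(Q * (ϑ⁻¹ * ϑ) * Qᵀ) := by rw [hQM, Matrix.mul_assoc, ← Matrix.mul_assoc ϑ⁻¹,
          Matrix.mul_assoc Q]
    _ = -(Q * Qᵀ) := by rw [Matrix.nonsing_inv_mul ϑ hdet, Matrix.mul_one]
  have h2 : M * (A + Aᵀ) = -(Q * Qᵀ) := by
    have hs : (A + Aᵀ) = -(Q * ϑ⁻¹ * Qᵀ) := by rw [hstruct, neg_neg]
    rw [hs]
    calc M * -(Q * ϑ⁻¹ * Qᵀ) = -((M * Q) * ϑ⁻¹ * Qᵀ) := by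
          rw [Matrix.mul_neg, Matrix.mul_assoc M, ← Matrix.mul_assoc M, ← Matrix.mul_assoc]
    _ = -(Q * (ϑ * ϑ⁻¹) * Qᵀ) := by rw [hMQ, Matrix.mul_assoc Q ϑ]
    _ = -(Q * Qᵀ) := by rw [Matrix.mul_nonsing_inv ϑ hdet, Matrix.mul_one]
  have key : (A - Aᵀ) * M = M * (A - Aᵀ) := by
    have expand : (A - Aᵀ) * M - M * (A - Aᵀ)
        = (A * M + M * Aᵀ) + (A * M + M * Aᵀ) - ((A + Aᵀ) * M + M * (A + Aᵀ)) := by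
      noncomm_ring
    have : (A - Aᵀ) * M - M * (A - Aᵀ) = 0 := by
      rw [expand, hlyap', h1, h2]; abel
    exact sub_eq_zero.mp this
  rw [smul_mul_assoc, mul_smul_comm, key]
end

section
/- Let θ be a self-adjoint involution on Ξ and A ∈ L(Ξ) stable with θAθ = A*, θQQ*θ = QQ*. If M solves AM + MA* + QQ* = 0 and satisfies [A − A*, M] = 0, then θMθ = M. -/
open Matrix Polynomial

lemma spec_iff_det' {n : Type*} [Fintype n] [DecidableEq n]
    (B : Matrix n n ℂ) (μ : ℂ) :
    μ ∈ spectrum ℂ B ↔ (μ • (1 : Matrix n n ℂ) - B).det = 0 := by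
  rw [spectrum.mem_iff, Algebra.algebraMap_eq_smul_one, Matrix.isUnit_iff_isUnit_det,
    isUnit_iff_ne_zero, not_ne_iff]

lemma eval_charpoly'' {n : Type*} [Fintype n] [DecidableEq n]
    (B : Matrix n n ℂ) (μ : ℂ) :
    B.charpoly.eval μ = (μ • (1 : Matrix n n ℂ) - B).det := by
  rw [Matrix.charpoly, ← Polynomial.coe_evalRingHom, RingHom.map_det]
  congr 1
  ext i j
  by_cases h : i = j
  · subst h
    simp [charmatrix_apply_eq, Matrix.smul_apply, Matrix.one_apply]
  · simp [charmatrix_apply_ne _ _ _ h, Matrix.smul_apply, Matrix.one_apply_ne h]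

lemma pow_intertwine {n : Type*} [Fintype n] [DecidableEq n]
    (B C X : Matrix n n ℂ) (h : B * X = X * C) (k : ℕ) :
    B ^ k * X = X * C ^ k := by
  induction k with
  | zero => simp
  | succ k ih => rw [pow_succ, mul_assoc, h, ← mul_assoc, ih, mul_assoc, ← pow_succ]

lemma aeval_intertwine {n : Type*} [Fintype n] [DecidableEq n]
    (B C X : Matrix n n ℂ) (h : B * X = X * C) (p : ℂ[X]) :
    (aeval B p) * X = X * (aeval C p) := by
  induction p using Polynomial.induction_on' with
  | add p q hp hq => simp [map_add, add_mul, mul_add, hp, hq]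
  | monomial k a =>
    have hk := pow_intertwine B C X h k
    simp [aeval_monomial, Algebra.algebraMap_eq_smul_one, smul_mul_assoc,
      mul_smul_comm, hk]

lemma sylvester_zero {n : Type*} [Fintype n] [DecidableEq n] [Nonempty n]
    (B C X : Matrix n n ℂ) (h : B * X = X * C)
    (hdisj : ∀ μ ∈ spectrum ℂ C, μ ∉ spectrum ℂ B) : X = 0 := by
  have h1 : X * aeval C B.charpoly = 0 := by
    rw [← aeval_intertwine B C X h, Matrix.aeval_self_charpoly, zero_mul]
  have hunit : IsUnit (aeval C B.charpoly) := by
    by_contra hnu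
    have h0 : (0 : ℂ) ∈ spectrum ℂ (aeval C B.charpoly) := spectrum.zero_mem (R := ℂ) hnu
    have hdeg : 0 < B.charpoly.degree := by
      rw [Matrix.charpoly_degree_eq_dim]
      exact_mod_cast Fintype.card_pos
    rw [spectrum.map_polynomial_aeval_of_degree_pos C B.charpoly hdeg] at h0
    obtain ⟨μ, hμ, hev⟩ := h0
    exact hdisj μ hμ ((spec_iff_det' B μ).mpr (by rw [← eval_charpoly'']; exact hev))
  obtain ⟨u, hu⟩ := hunit
  have h2 : aeval C B.charpoly * (↑u⁻¹ : Matrix n n ℂ) = 1 := by rw [← hu]; exact u.mul_inv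
  calc X = X * (aeval C B.charpoly * (↑u⁻¹ : Matrix n n ℂ)) := by rw [h2, mul_one]
  _ = X * aeval C B.charpoly * (↑u⁻¹ : Matrix n n ℂ) := by rw [mul_assoc]
  _ = 0 := by rw [h1, zero_mul]

lemma spec_neg_transpose {n : Type*} [Fintype n] [DecidableEq n]
    (B : Matrix n n ℂ) (μ : ℂ) (h : μ ∈ spectrum ℂ (-Bᵀ)) :
    -μ ∈ spectrum ℂ B := by
  rw [spec_iff_det'] at h ⊢
  have h2 : (μ • (1 : Matrix n n ℂ) - -Bᵀ) = (-((-μ) • (1 : Matrix n n ℂ) - B))ᵀ := by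
    ext i j
    by_cases hij : i = j
    · subst hij
      simp [Matrix.smul_apply, Matrix.one_apply_eq]
      ring
    · simp [Matrix.smul_apply, Matrix.one_apply_ne, hij, Ne.symm hij]
  rw [h2, Matrix.det_transpose, Matrix.det_neg] at h
  simpa using h

/-- Let `θ` be a self-adjoint involution with `θAθ = Aᵀ` and `θ QQᵀ θ = QQᵀ`, `A` stable.
If `M` solves the Lyapunov equation `AM + MAᵀ + QQᵀ = 0` and `[A - Aᵀ, M] = 0`,
then `θMθ = M`. -/
theorem time_reversal_invariance_of_M {m d : Type*}
    [Fintype m] [Fintype d] [DecidableEq m]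
    (θ A M : Matrix m m ℝ) (Q : Matrix m d ℝ)
    (hθsym : θᵀ = θ) (hθinv : θ * θ = 1)
    (hstable : ∀ μ ∈ spectrum ℂ (A.map (Complex.ofReal : ℝ → ℂ)), μ.re < 0)
    (hA : θ * A * θ = Aᵀ) (hB : θ * (Q * Qᵀ) * θ = Q * Qᵀ)
    (hlyap : A * M + M * Aᵀ + Q * Qᵀ = 0)
    (hcomm : (A - Aᵀ) * M = M * (A - Aᵀ)) :
    θ * M * θ = M := by
  cases isEmpty_or_nonempty m with
  | inl hempty => exact Subsingleton.elim _ _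
  | inr hne =>
    -- Step 1: Aᵀ M + M A + QQᵀ = 0
    have hlyap2 : Aᵀ * M + M * A + Q * Qᵀ = 0 := by
      have h := hcomm
      rw [sub_mul, mul_sub] at h
      have hkey := sub_eq_sub_iff_add_eq_add.mp h
      -- hkey : A*M + M*Aᵀ = M*A + Aᵀ*M
      rw [show Aᵀ * M + M * A = M * A + Aᵀ * M from add_comm _ _, ← hkey]
      exact hlyap
    -- Step 2: conjugating by θ : A (θMθ) + (θMθ) Aᵀ + QQᵀ = 0
    set N := θ * M * θ with hN
    have hAT : θ * Aᵀ * θ = A := by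
      rw [← hA, show θ * (θ * A * θ) * θ = (θ * θ) * A * (θ * θ) by noncomm_ring,
        hθinv, one_mul, mul_one]
    have hlyapN : A * N + N * Aᵀ + Q * Qᵀ = 0 := by
      have h3 : θ * (Aᵀ * M + M * A + Q * Qᵀ) * θ = 0 := by rw [hlyap2]; simp
      have hmain : θ * (Aᵀ * M + M * A + Q * Qᵀ) * θ
          = A * N + N * Aᵀ + Q * Qᵀ := by
        have e1 : θ * (Aᵀ * M) * θ = (θ * Aᵀ * θ) * (θ * M * θ) := by
          rw [show (θ * Aᵀ * θ) * (θ * M * θ) = θ * Aᵀ * ((θ * θ) * (M * θ)) by noncomm_ring,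
            hθinv, one_mul]
          noncomm_ring
        have e2 : θ * (M * A) * θ = (θ * M * θ) * (θ * A * θ) := by
          rw [show (θ * M * θ) * (θ * A * θ) = θ * M * ((θ * θ) * (A * θ)) by noncomm_ring,
            hθinv, one_mul]
          noncomm_ring
        rw [hN, mul_add, add_mul, mul_add, add_mul, e1, e2, hAT, hA, hB]
      rw [← hmain, h3]
    -- Step 3: the difference N - M satisfies A X = X (-Aᵀ)
    have heq : A * N + N * Aᵀ = A * M + M * Aᵀ := by
      have := hlyapN.trans hlyap.symm
      exact add_right_cancel this
    have hdiff : A * (N - M) = (N - M) * (-Aᵀ) := by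
      have hss : A * N - A * M = M * Aᵀ - N * Aᵀ :=
        sub_eq_sub_iff_add_eq_add.mpr (by rw [heq]; exact add_comm _ _)
      calc A * (N - M) = A * N - A * M := by rw [mul_sub]
      _ = M * Aᵀ - N * Aᵀ := hss
      _ = (N - M) * (-Aᵀ) := by noncomm_ring
    -- Step 4: pass to ℂ and apply Sylvester uniqueness
    set f : Matrix m m ℝ →+* Matrix m m ℂ :=
      (Complex.ofRealHom : ℝ →+* ℂ).mapMatrix with hf
    have hmapc : ∀ (P : Matrix m m ℝ), f P = P.map (Complex.ofReal : ℝ → ℂ) := fun _ => rfl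
    have hT : f (-Aᵀ) = -(f A)ᵀ := by
      ext i j
      simp [hmapc, Matrix.map_apply]
    have hc : (f A) * (f (N - M)) = (f (N - M)) * (-(f A)ᵀ) := by
      have h4 := congrArg f hdiff
      rw [RingHom.map_mul, RingHom.map_mul, hT] at h4
      exact h4
    have hXzero : f (N - M) = 0 := by
      apply sylvester_zero (f A) (-(f A)ᵀ) (f (N - M)) hc
      intro μ hμ hμB
      have h1 := hstable μ (by rwa [← hmapc])
      have h2 := hstable (-μ) (by rw [← hmapc]; exact spec_neg_transpose (f A) μ hμ)
      simp only [Complex.neg_re] at h2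
      linarith
    have hNM : N - M = 0 := by
      ext i j
      have h5 := congrFun (congrFun hXzero i) j
      simp only [hmapc, Matrix.map_apply, Matrix.zero_apply] at h5
      exact_mod_cast h5
    exact sub_eq_zero.mp hNM
end

section
/- With U(ω) = I + ϑ^{−1}Q*(A + iω)^{−1}Q as above (A stable, A + A* = −Qϑ^{−1}Q*, θQ = ±Q, θAθ = A* for an involution θ), one has U(−ω)^{−1} = U(ω) for all ω ∈ ℝ. -/
open Matrix

private lemma rmap_mul {a b c : Type*} [Fintype b] (X : Matrix a b ℝ) (Y : Matrix b c ℝ) :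
    (X * Y).map (Complex.ofReal : ℝ → ℂ) = X.map Complex.ofReal * Y.map Complex.ofReal := by
  ext i j
  simp [Matrix.mul_apply, Matrix.map_apply]

private lemma rmap_one {a : Type*} [DecidableEq a] :
    ((1 : Matrix a a ℝ).map (Complex.ofReal : ℝ → ℂ)) = 1 := by
  ext i j
  by_cases h : i = j <;> simp [Matrix.map_apply, Matrix.one_apply, h]

private lemma rmap_neg {a b : Type*} (X : Matrix a b ℝ) :
    ((-X).map (Complex.ofReal : ℝ → ℂ)) = -(X.map Complex.ofReal) := by
  ext i j
  simp [Matrix.map_apply]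

private lemma rmap_add {a b : Type*} (X Y : Matrix a b ℝ) :
    ((X + Y).map (Complex.ofReal : ℝ → ℂ)) = X.map Complex.ofReal + Y.map Complex.ofReal := by
  ext i j
  simp [Matrix.map_apply]

private lemma one_step_aux {m d : Type*} [Fintype m] [Fintype d] [DecidableEq m] [DecidableEq d]
    (Q : Matrix m d ℂ) (T : Matrix d d ℂ) (M N N' : Matrix m m ℂ)
    (hM : IsUnit M.det) (hN' : IsUnit N'.det)
    (hsum : Q * T * Qᵀ = -(M + N'))
    (hrepl : Qᵀ * N⁻¹ * Q = Qᵀ * N'⁻¹ * Q) :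
    (1 + T * Qᵀ * M⁻¹ * Q) * (1 + T * Qᵀ * N⁻¹ * Q) = 1 := by
  have hY : T * Qᵀ * N⁻¹ * Q = T * Qᵀ * N'⁻¹ * Q := by
    have := congrArg (fun X => T * X) hrepl
    simpa [Matrix.mul_assoc] using this
  rw [hY]
  have h1 : M⁻¹ * (Q * T * Qᵀ) * N'⁻¹ = -(N'⁻¹ + M⁻¹) := by
    rw [hsum, Matrix.mul_neg, Matrix.neg_mul]
    congr 1
    rw [Matrix.mul_add, Matrix.nonsing_inv_mul _ hM, Matrix.add_mul, Matrix.one_mul,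
      Matrix.mul_assoc, Matrix.mul_nonsing_inv _ hN', Matrix.mul_one]
  have hXY : (T * Qᵀ * M⁻¹ * Q) * (T * Qᵀ * N'⁻¹ * Q)
      = -(T * Qᵀ * N'⁻¹ * Q) - T * Qᵀ * M⁻¹ * Q := by
    calc (T * Qᵀ * M⁻¹ * Q) * (T * Qᵀ * N'⁻¹ * Q)
        = T * Qᵀ * (M⁻¹ * (Q * T * Qᵀ) * N'⁻¹) * Q := by
          simp only [Matrix.mul_assoc]
      _ = _ := by
          rw [h1]
          simp only [Matrix.mul_neg, Matrix.neg_mul, Matrix.mul_add, Matrix.add_mul]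
          simp only [Matrix.mul_assoc]
          abel
  rw [mul_add, mul_one, add_mul, one_mul, hXY]
  abel

private lemma stable_isUnit_aux {m : Type*} [Fintype m] [DecidableEq m] (A : Matrix m m ℝ)
    (hstable : ∀ μ ∈ spectrum ℂ (A.map (Complex.ofReal : ℝ → ℂ)), μ.re < 0)
    (w : ℂ) (hw : w.re = 0) :
    IsUnit (A.map (Complex.ofReal : ℝ → ℂ) + w • 1).det := by
  set Ac := A.map (Complex.ofReal : ℝ → ℂ)
  have hmem : -w ∉ spectrum ℂ Ac := by
    intro h
    have := hstable _ h
    simp [hw] at this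
  have := spectrum.notMem_iff.mp hmem
  rw [Algebra.algebraMap_eq_smul_one] at this
  have h2 : (-w) • (1 : Matrix m m ℂ) - Ac = -(Ac + w • 1) := by
    rw [neg_smul]; abel
  rw [h2] at this
  have := (Matrix.isUnit_iff_isUnit_det _).mp this
  rw [Matrix.det_neg] at this
  exact (IsUnit.mul_iff.mp this).2

/-- With `U(ω) = I + ϑ⁻¹ Q* (A + iω)⁻¹ Q`, where `A` is stable,
`A + Aᵀ = -Q ϑ⁻¹ Qᵀ`, and time-reversal covariance holds (`θ` a self-adjoint
involution with `θQ = ±Q`, `θAθ = Aᵀ`), one has `U(-ω)⁻¹ = U(ω)`. -/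
theorem U_inverse_relation {m d : Type*}
    [Fintype m] [Fintype d] [DecidableEq m] [DecidableEq d]
    (A θ : Matrix m m ℝ) (Q : Matrix m d ℝ) (ϑ : Matrix d d ℝ)
    (hϑ : ϑ.PosDef)
    (hstable : ∀ μ ∈ spectrum ℂ (A.map (Complex.ofReal : ℝ → ℂ)), μ.re < 0)
    (hstruct : A + Aᵀ = -(Q * ϑ⁻¹ * Qᵀ))
    (hθsym : θᵀ = θ) (hθinv : θ * θ = 1)
    (hθQ : θ * Q = Q ∨ θ * Q = -Q) (hθA : θ * A * θ = Aᵀ) (ω : ℝ) :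
    let Ac : Matrix m m ℂ := A.map (Complex.ofReal : ℝ → ℂ)
    let Qc : Matrix m d ℂ := Q.map (Complex.ofReal : ℝ → ℂ)
    let ϑc : Matrix d d ℂ := ϑ.map (Complex.ofReal : ℝ → ℂ)
    let U : ℝ → Matrix d d ℂ :=
      fun w => 1 + ϑc⁻¹ * Qcᴴ * (Ac + ((w : ℂ) * Complex.I) • 1)⁻¹ * Qc
    U (-ω) * U ω = 1 ∧ U ω * U (-ω) = 1 := by
  intro Ac Qc ϑc U
  have hQH : Qcᴴ = Qcᵀ := by
    ext i j
    simp [Qc, Matrix.conjTranspose_apply, Matrix.map_apply, Complex.conj_ofReal]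
  -- ϑ is invertible, and complexification commutes with inverse
  have hϑdet : IsUnit ϑ.det := hϑ.det_pos.ne'.isUnit
  have hϑc : ϑc⁻¹ = (ϑ⁻¹).map (Complex.ofReal : ℝ → ℂ) := by
    apply Matrix.inv_eq_right_inv
    show ϑ.map (Complex.ofReal : ℝ → ℂ) * (ϑ⁻¹).map Complex.ofReal = 1
    rw [← rmap_mul, Matrix.mul_nonsing_inv _ hϑdet, rmap_one]
  -- complexified structural relation
  have hsumc : Qc * ϑc⁻¹ * Qcᵀ = -(Ac + Acᵀ) := by
    show Q.map Complex.ofReal * ϑc⁻¹ * (Q.map Complex.ofReal)ᵀ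
        = -(A.map Complex.ofReal + (A.map Complex.ofReal)ᵀ)
    rw [hϑc]
    have := congrArg (Matrix.map · (Complex.ofReal : ℝ → ℂ)) hstruct
    simp only [rmap_add, rmap_neg, rmap_mul, Matrix.transpose_map] at this
    rw [this, neg_neg]
  -- complexified θ facts
  set θc : Matrix m m ℂ := θ.map (Complex.ofReal : ℝ → ℂ) with hθcdef
  have hθcinv : θc * θc = 1 := by rw [hθcdef, ← rmap_mul, hθinv, rmap_one]
  have hθcA : θc * Ac * θc = Acᵀ := by
    show θ.map Complex.ofReal * A.map Complex.ofReal * θ.map Complex.ofReal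
        = (A.map Complex.ofReal)ᵀ
    rw [← rmap_mul, ← rmap_mul, ← Matrix.transpose_map, hθA]
  have hθcsym : θcᵀ = θc := by
    rw [hθcdef, ← Matrix.transpose_map, hθsym]
  have hθcQ : θc * Qc = Qc ∨ θc * Qc = -Qc := by
    rcases hθQ with h | h
    · left
      show θ.map Complex.ofReal * Q.map Complex.ofReal = Q.map Complex.ofReal
      rw [← rmap_mul, h]
    · right
      show θ.map Complex.ofReal * Q.map Complex.ofReal = -(Q.map Complex.ofReal)
      rw [← rmap_mul, h, rmap_neg]
  -- determinant facts
  have hdet : ∀ w : ℂ, w.re = 0 → IsUnit (Ac + w • 1).det := fun w hw =>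
    stable_isUnit_aux A hstable w hw
  have hdetT : ∀ w : ℂ, w.re = 0 → IsUnit (Acᵀ + w • 1).det := by
    intro w hw
    have h : Acᵀ + w • 1 = (Ac + w • 1)ᵀ := by
      rw [Matrix.transpose_add, Matrix.transpose_smul, Matrix.transpose_one]
    rw [h, Matrix.det_transpose]
    exact hdet w hw
  -- key θ-covariance replacement
  have hrepl : ∀ w : ℂ, w.re = 0 →
      Qcᵀ * (Acᵀ + w • 1)⁻¹ * Qc = Qcᵀ * (Ac + w • 1)⁻¹ * Qc := by
    intro w hw
    set N := Ac + w • 1 with hN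
    have hconj : θc * N * θc = Acᵀ + w • 1 := by
      rw [hN, Matrix.mul_add, Matrix.add_mul, hθcA]
      congr 1
      rw [Matrix.mul_smul, Matrix.mul_one, Matrix.smul_mul, hθcinv]
    have hNdet : IsUnit N.det := hdet w hw
    have hNt : (Acᵀ + w • 1)⁻¹ = θc * N⁻¹ * θc := by
      apply Matrix.inv_eq_right_inv
      rw [← hconj]
      have h3 : θc * N * θc * (θc * N⁻¹ * θc) = θc * (N * (θc * θc) * N⁻¹) * θc := by
        simp only [Matrix.mul_assoc]
      rw [h3, hθcinv, Matrix.mul_one, Matrix.mul_nonsing_inv _ hNdet, Matrix.mul_one, hθcinv]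
    rw [hNt]
    have h4 : Qcᵀ * (θc * N⁻¹ * θc) * Qc = (Qcᵀ * θc) * N⁻¹ * (θc * Qc) := by
      simp only [Matrix.mul_assoc]
    rw [h4]
    rcases hθcQ with h' | h'
    · have h : Qcᵀ * θc = Qcᵀ := by rw [← hθcsym, ← Matrix.transpose_mul, h']
      rw [h, h']
    · have h : Qcᵀ * θc = -Qcᵀ := by
        rw [← hθcsym, ← Matrix.transpose_mul, h', Matrix.transpose_neg]
      rw [h, h']
      simp only [Matrix.neg_mul, Matrix.mul_neg, neg_neg]
  -- the two unitarity identities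
  have him : ∀ w : ℝ, ((w : ℂ) * Complex.I).re = 0 := by
    intro w; simp
  constructor
  · show (1 + ϑc⁻¹ * Qcᴴ * (Ac + (((-ω : ℝ) : ℂ) * Complex.I) • 1)⁻¹ * Qc) *
        (1 + ϑc⁻¹ * Qcᴴ * (Ac + ((ω : ℂ) * Complex.I) • 1)⁻¹ * Qc) = 1
    rw [hQH]
    apply one_step_aux Qc (ϑc⁻¹) _ _ (Acᵀ + ((ω : ℂ) * Complex.I) • 1)
      (hdet _ (him (-ω))) (hdetT _ (him ω))
    · rw [hsumc]
      congr 1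
      have : (((-ω : ℝ) : ℂ) * Complex.I) • (1 : Matrix m m ℂ)
          = -(((ω : ℂ) * Complex.I) • 1) := by
        rw [Complex.ofReal_neg, neg_mul, neg_smul]
      rw [this]; abel
    · exact (hrepl _ (him ω)).symm
  · show (1 + ϑc⁻¹ * Qcᴴ * (Ac + ((ω : ℂ) * Complex.I) • 1)⁻¹ * Qc) *
        (1 + ϑc⁻¹ * Qcᴴ * (Ac + (((-ω : ℝ) : ℂ) * Complex.I) • 1)⁻¹ * Qc) = 1
    rw [hQH]
    apply one_step_aux Qc (ϑc⁻¹) _ _ (Acᵀ + (((-ω : ℝ) : ℂ) * Complex.I) • 1)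
      (hdet _ (him ω)) (hdetT _ (him (-ω)))
    · rw [hsumc]
      congr 1
      have : (((-ω : ℝ) : ℂ) * Complex.I) • (1 : Matrix m m ℂ)
          = -(((ω : ℂ) * Complex.I) • 1) := by
        rw [Complex.ofReal_neg, neg_mul, neg_smul]
      rw [this]; abel
    · exact (hrepl _ (him (-ω))).symm
end

section
/- Let E be a self-adjoint matrix with det(I − E) of modulus 1 in the following strong sense: (I − αE) = W*(I − (1−α)E'')W for a unitary-like conjugation preserving spectra, so that the nonzero eigenvalues of E come in pairs (ε, ε') with 0 < ε < 1 and ε' = −ε/(1 − ε). Then the extreme eigenvalues ε₊ = max sp(E) ∈ (0,1) and ε₋ = min sp(E) < 0 satisfy 1/ε₋ + 1/ε₊ = 1, provided E ≠ 0. -/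
open Matrix

/-- Eigenvalue pairing: if the eigenvalues of a nonzero Hermitian matrix `E` lie in
`(-∞, 1)` and every nonzero eigenvalue `ε` has the partner `-ε/(1-ε)` among the
eigenvalues, then `ε₊ = max sp E ∈ (0,1)`, `ε₋ = min sp E < 0`, and
`1/ε₋ + 1/ε₊ = 1`. -/
theorem eigenvalue_pairing_extremes {n : Type*} [Fintype n] [DecidableEq n] [Nonempty n]
    (E : Matrix n n ℂ) (hE : E.IsHermitian) (hne : E ≠ 0)
    (hlt : ∀ i, hE.eigenvalues i < 1)
    (hpair : ∀ i, hE.eigenvalues i ≠ 0 →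
      ∃ j, hE.eigenvalues j = -hE.eigenvalues i / (1 - hE.eigenvalues i)) :
    0 < Finset.univ.sup' Finset.univ_nonempty hE.eigenvalues ∧
    Finset.univ.sup' Finset.univ_nonempty hE.eigenvalues < 1 ∧
    Finset.univ.inf' Finset.univ_nonempty hE.eigenvalues < 0 ∧
    1 / Finset.univ.inf' Finset.univ_nonempty hE.eigenvalues +
      1 / Finset.univ.sup' Finset.univ_nonempty hE.eigenvalues = 1 := by
  set f := hE.eigenvalues with hf
  set M := Finset.univ.sup' Finset.univ_nonempty f with hM
  set m := Finset.univ.inf' Finset.univ_nonempty f with hm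
  have hle : ∀ i, f i ≤ M := fun i => Finset.le_sup' f (Finset.mem_univ i)
  have hge : ∀ i, m ≤ f i := fun i => Finset.inf'_le f (Finset.mem_univ i)
  -- some nonzero eigenvalue
  have hex : ∃ i, f i ≠ 0 := by
    by_contra h
    push_neg at h
    apply hne
    have := hE.spectral_theorem
    rw [this]
    have : Matrix.diagonal (RCLike.ofReal ∘ f : n → ℂ) = 0 := by
      ext i j
      by_cases hij : i = j <;> simp [Matrix.diagonal, hij, h]
    rw [this]
    simp
  obtain ⟨i0, hi0⟩ := hex
  -- there is a positive and a negative eigenvalue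
  have key : (∃ i, 0 < f i) ∧ (∃ i, f i < 0) := by
    obtain ⟨j, hj⟩ := hpair i0 hi0
    rcases hi0.lt_or_gt with h | h
    · constructor
      · exact ⟨j, by rw [hj]; exact div_pos (by linarith) (by linarith [hlt i0])⟩
      · exact ⟨i0, h⟩
    · constructor
      · exact ⟨i0, h⟩
      · refine ⟨j, ?_⟩
        rw [hj]
        apply div_neg_of_neg_of_pos <;> [linarith; linarith [hlt i0]]
  obtain ⟨⟨ip, hip⟩, ⟨iq, hiq⟩⟩ := key
  have hMpos : 0 < M := lt_of_lt_of_le hip (hle ip)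
  have hmneg : m < 0 := lt_of_le_of_lt (hge iq) hiq
  have hM1 : M < 1 := by
    rw [hM, Finset.sup'_lt_iff]
    exact fun i _ => hlt i
  refine ⟨hMpos, hM1, hmneg, ?_⟩
  obtain ⟨iM, -, hiM⟩ := Finset.exists_mem_eq_sup' (Finset.univ_nonempty) f
  obtain ⟨im, -, him⟩ := Finset.exists_mem_eq_inf' (Finset.univ_nonempty) f
  have hMf : M = f iM := hiM
  have hmf : m = f im := him
  obtain ⟨j1, hj1⟩ := hpair iM (by rw [← hMf]; exact ne_of_gt hMpos)
  obtain ⟨j2, hj2⟩ := hpair im (by rw [← hmf]; exact ne_of_lt hmneg)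
  -- m ≤ -M/(1-M)
  have h1 : m ≤ -M / (1 - M) := by
    have := hge j1
    rw [hj1, ← hMf] at this
    exact this
  -- -m/(1-m) ≤ M
  have h2 : -m / (1 - m) ≤ M := by
    have := hle j2
    rw [hj2, ← hmf] at this
    exact this
  have hM1' : (0:ℝ) < 1 - M := by linarith
  have hm1' : (0:ℝ) < 1 - m := by linarith
  have e1 : m * (1 - M) ≤ -M := by
    have := (le_div_iff₀ hM1').mp h1
    linarith
  have e2 : -m ≤ M * (1 - m) := (div_le_iff₀ hm1').mp h2
  have ekey : m * (1 - M) = -M := by nlinarith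
  have hm0 : m ≠ 0 := ne_of_lt hmneg
  have hM0 : M ≠ 0 := ne_of_gt hMpos
  field_simp
  nlinarith [ekey]
end
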